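/- For any binary-input DMC W, the Bhattacharyya parameters of the polarized channels satisfy Z(W^+) = Z(W)^2. -/

import Mathlib

/-!
For either value of `u`, the inputs `u` and `u + 1` of the first coordinate of `W⁺` run over
both `0` and `1`, so `W⁺(y₁, y₂, u | 0) W⁺(y₁, y₂, u | 1) = ¼ W(y₁|0) W(y₁|1) W(y₂|0) W(y₂|1)`.
Taking square roots and summing over `(y₁, y₂, u)` yields `Z(W)²`.
-/

open Finset

/-- A discrete channel: nonnegative transition "probabilities" summing to one. -/
def IsChannel {X Y : Type} [Fintype Y] (W : X → Y → ℝ) : Prop :=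
  (∀ x y, 0 ≤ W x y) ∧ ∀ x, ∑ y, W x y = 1

/-- `Wd` is (stochastically) degraded with respect to `W`. -/
def Degraded {X Y Z : Type} [Fintype Y] [Fintype Z]
    (Wd : X → Z → ℝ) (W : X → Y → ℝ) : Prop :=
  ∃ P : Y → Z → ℝ, IsChannel P ∧ ∀ x z, Wd x z = ∑ y, P y z * W x y
/-- Arıkan's minus transform. -/
noncomputable def Wminus {Y : Type} (W : Fin 2 → Y → ℝ) : Fin 2 → Y × Y → ℝ :=
  fun u1 p => ∑ u2 : Fin 2, (1 / 2 : ℝ) * W (u1 + u2) p.1 * W u2 p.2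

/-- Arıkan's plus transform. -/
noncomputable def Wplus {Y : Type} (W : Fin 2 → Y → ℝ) : Fin 2 → Y × Y × Fin 2 → ℝ :=
  fun u2 p => (1 / 2 : ℝ) * W (p.2.2 + u2) p.1 * W u2 p.2.1
/-- Bhattacharyya parameter. -/
noncomputable def Zparam {Y : Type} [Fintype Y] (W : Fin 2 → Y → ℝ) : ℝ :=
  ∑ y, Real.sqrt (W 0 y * W 1 y)

/-- Symmetric capacity (mutual information with uniform input), in bits. -/
noncomputable def Icap {Y : Type} [Fintype Y] (W : Fin 2 → Y → ℝ) : ℝ :=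
  ∑ y, ∑ x : Fin 2, (1 / 2 : ℝ) * W x y *
    Real.logb 2 (W x y / ((1 / 2) * W 0 y + (1 / 2) * W 1 y))

lemma Fin.two_mul_apply_add_one {M : Type*} [CommMagma M] (f : Fin 2 → M) (u : Fin 2) :
    f u * f (u + 1) = f 0 * f 1 := by
  fin_cases u
  · rfl
  · exact mul_comm _ _

lemma Wplus_zero_mul_Wplus_one {Y : Type} (W : Fin 2 → Y → ℝ) (a b : Y) (u : Fin 2) :
    Wplus W 0 (a, b, u) * Wplus W 1 (a, b, u)
      = (1 / 2) ^ 2 * ((W 0 a * W 1 a) * (W 0 b * W 1 b)) := by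
  have h := Fin.two_mul_apply_add_one (W · a) u
  simp only [Wplus, add_zero, add_comm u 1] at h ⊢
  linear_combination (1 / 2) ^ 2 * W 0 b * W 1 b * h

lemma sqrt_Wplus_zero_mul_Wplus_one {Y : Type} {W : Fin 2 → Y → ℝ} (hW : ∀ x y, 0 ≤ W x y)
    (a b : Y) (u : Fin 2) :
    √(Wplus W 0 (a, b, u) * Wplus W 1 (a, b, u))
      = 1 / 2 * (√(W 0 a * W 1 a) * √(W 0 b * W 1 b)) := by
  rw [Wplus_zero_mul_Wplus_one, Real.sqrt_mul (by positivity),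
    Real.sqrt_mul (mul_nonneg (hW 0 a) (hW 1 a)), Real.sqrt_sq (by norm_num)]

/-- `Z(W⁺) = Z(W)²`. -/
theorem bhattacharyya_plus {Y : Type} [Fintype Y]
    (W : Fin 2 → Y → ℝ) (hW : IsChannel W) :
    Zparam (Wplus W) = (Zparam W) ^ 2 := by
  simp only [Zparam, Fintype.sum_prod_type, sqrt_Wplus_zero_mul_Wplus_one hW.1,
    Fin.sum_univ_two, sq, Finset.sum_mul_sum]
  refine Finset.sum_congr rfl fun a _ => Finset.sum_congr rfl fun b _ => ?_
  ring
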